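/- Let K : ℝ → ℝ be a nonnegative probability density bounded by M_K, and let Y be a real random variable. Let B(x) := K(x - Y) V - E[K(x - Y) V] for any random variable V with 0 ≤ V ≤ 1 measurable with respect to Y. If Y¹,…,Yᴺ are i.i.d. copies of Y and Vⁱ = v(Yⁱ) with 0 ≤ v ≤ 1, then ∫_ℝ E[ ( (1/N) Σⱼ K(x-Yʲ)v(Yʲ) - E[K(x-Y)v(Y)])² ] dx ≤ M_K / N. -/

import Mathlib

open MeasureTheory ProbabilityTheory

/-! For fixed `x`, put `f_x y = K (x - y) * v y ∈ [0, M_K]`. The inner integral is the mean squared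
error of the empirical mean of the i.i.d. variables `f_x (Yʲ)`, that is
`Var (f_x Y) / N ≤ E[f_x(Y)²] / N ≤ M_K E[f_x Y] / N`. Integrating in `x`, Fubini and translation
invariance of Lebesgue measure give `∫ E[f_x Y] dx = E[v Y] ∫ K ≤ 1`. -/

section Variance

variable {Ω : Type*} [MeasurableSpace Ω] {P : Measure Ω}

lemma variance_average_le {ι : Type*} [Fintype ι] {X : ι → Ω → ℝ} (hX : ∀ i, MemLp (X i) 2 P)
    (hindep : Pairwise fun i j => IndepFun (X i) (X j) P) {σ2 : ℝ}
    (hσ : ∀ i, variance (X i) P ≤ σ2) :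
    variance (fun ω => (Fintype.card ι : ℝ)⁻¹ * ∑ i, X i ω) P ≤ σ2 / Fintype.card ι := by
  have hsum : variance (fun ω => ∑ i, X i ω) P = ∑ i, variance (X i) P := by
    simpa only [← Finset.sum_fn] using IndepFun.variance_sum (s := Finset.univ) (fun i _ => hX i)
      (fun i _ j _ hij => hindep hij)
  set n : ℝ := (Fintype.card ι : ℝ)
  calc variance (fun ω => n⁻¹ * ∑ i, X i ω) P = n⁻¹ ^ 2 * ∑ i, variance (X i) P := by
        rw [variance_const_mul, hsum]
    _ ≤ n⁻¹ ^ 2 * (n * σ2) := by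
        gcongr
        simpa [n] using Finset.sum_le_sum fun i (_ : i ∈ Finset.univ) => hσ i
    _ = σ2 / n := by
        rcases eq_or_ne n 0 with hn | hn
        · simp [hn]
        · field_simp

variable [IsProbabilityMeasure P]

lemma variance_le_mul_integral_of_mem_Icc {X : Ω → ℝ} {M : ℝ}
    (hXm : AEStronglyMeasurable X P) (hX : ∀ᵐ ω ∂P, X ω ∈ Set.Icc 0 M) :
    variance X P ≤ M * ∫ ω, X ω ∂P := by
  have hXint : Integrable X P := .of_bound hXm M <| hX.mono fun ω h => by
    rw [Real.norm_eq_abs, abs_of_nonneg h.1]; exact h.2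
  calc variance X P ≤ ∫ ω, X ω ^ 2 ∂P := variance_le_expectation_sq hXm
    _ ≤ ∫ ω, M * X ω ∂P :=
      integral_mono_of_nonneg (ae_of_all _ fun ω => sq_nonneg _) (hXint.const_mul M) <|
        hX.mono fun ω h => by
          simpa only [sq] using mul_le_mul_of_nonneg_right h.2 h.1
    _ = M * ∫ ω, X ω ∂P := integral_const_mul M _

theorem integral_sq_empirical_mean_sub_le {α ι : Type*} [MeasurableSpace α] [Fintype ι]
    [Nonempty ι] {Y : ι → Ω → α} (hY : ∀ i, Measurable (Y i))
    (hindep : Pairwise fun i j => IndepFun (Y i) (Y j) P) {ν : Measure α}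
    (hlaw : ∀ i, P.map (Y i) = ν) {f : α → ℝ} (hf : Measurable f) {M : ℝ}
    (hfM : ∀ y, f y ∈ Set.Icc 0 M) :
    ∫ ω, ((Fintype.card ι : ℝ)⁻¹ * ∑ i, f (Y i ω) - ∫ y, f y ∂ν) ^ 2 ∂P
      ≤ M / Fintype.card ι * ∫ y, f y ∂ν := by
  set n : ℝ := (Fintype.card ι : ℝ)
  have hn : n ≠ 0 := Nat.cast_ne_zero.2 Fintype.card_ne_zero
  have hmean : ∀ i, ∫ ω, f (Y i ω) ∂P = ∫ y, f y ∂ν := fun i => by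
    rw [← hlaw i, integral_map (hY i).aemeasurable hf.aestronglyMeasurable]
  have hmemLp : ∀ i, MemLp (fun ω => f (Y i ω)) 2 P := fun i =>
    memLp_of_bounded (ae_of_all _ fun ω => hfM (Y i ω)) (hf.comp (hY i)).aestronglyMeasurable 2
  have hvar : ∀ i, variance (fun ω => f (Y i ω)) P ≤ M * ∫ y, f y ∂ν := fun i =>
    hmean i ▸ variance_le_mul_integral_of_mem_Icc (hf.comp (hY i)).aestronglyMeasurable
      (ae_of_all _ fun ω => hfM _)
  have hmean_avg : ∫ ω, n⁻¹ * ∑ i, f (Y i ω) ∂P = ∫ y, f y ∂ν := by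
    rw [integral_const_mul, integral_finsetSum _ fun i _ => (hmemLp i).integrable one_le_two]
    simp [hmean, n, hn]
  calc ∫ ω, (n⁻¹ * ∑ i, f (Y i ω) - ∫ y, f y ∂ν) ^ 2 ∂P
      = variance (fun ω => n⁻¹ * ∑ i, f (Y i ω)) P := by
        rw [variance_eq_integral (by fun_prop), hmean_avg]
    _ ≤ M * (∫ y, f y ∂ν) / n :=
        variance_average_le hmemLp (fun i j hij => (hindep hij).comp hf hf) hvar
    _ = M / n * ∫ y, f y ∂ν := by ring

end Variance

section Convolution

variable {G : Type*} [AddGroup G] [MeasurableSpace G] [MeasurableAdd G] [MeasurableSub₂ G]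
  {μ ν : Measure G} [SFinite μ] [SFinite ν] [μ.IsAddRightInvariant] {K w : G → ℝ}

lemma integrable_prod_sub_mul (hKm : Measurable K) (hwm : Measurable w) (hK : Integrable K μ)
    (hw : Integrable w ν) : Integrable (fun p : G × G => K (p.1 - p.2) * w p.2) (μ.prod ν) := by
  refine (integrable_prod_iff' ?_).2
    ⟨ae_of_all _ fun y => (hK.comp_sub_right y).mul_const (w y), ?_⟩
  · exact ((hKm.comp measurable_sub).mul (hwm.comp measurable_snd)).aestronglyMeasurable
  · simp_rw [norm_mul, integral_mul_const, integral_sub_right_eq_self (fun x => ‖K x‖)]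
    exact hw.norm.const_mul _

lemma integral_integral_sub_mul (hKm : Measurable K) (hwm : Measurable w) (hK : Integrable K μ)
    (hw : Integrable w ν) :
    ∫ x, ∫ y, K (x - y) * w y ∂ν ∂μ = (∫ x, K x ∂μ) * ∫ y, w y ∂ν := by
  rw [integral_integral_swap (integrable_prod_sub_mul hKm hwm hK hw)]
  simp_rw [integral_mul_const, integral_sub_right_eq_self K]
  exact integral_const_mul _ _

end Convolution

theorem empirical_kernel_variance_bound
    {Ω : Type*} [MeasurableSpace Ω] (P : Measure Ω) [IsProbabilityMeasure P]
    (N : ℕ) (hN : 1 ≤ N) (MK : ℝ)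
    (K : ℝ → ℝ) (hKm : Measurable K) (hKnn : ∀ x, 0 ≤ K x) (hKb : ∀ x, K x ≤ MK)
    (hKdens : ∫ x, K x = 1)
    (v : ℝ → ℝ) (hvm : Measurable v) (hv : ∀ x, v x ∈ Set.Icc (0:ℝ) 1)
    (Y : Fin N → Ω → ℝ) (hYm : ∀ i, Measurable (Y i))
    (hindep : iIndepFun Y P)
    (ν : Measure ℝ) [IsProbabilityMeasure ν] (hlaw : ∀ i, P.map (Y i) = ν) :
    (∫ x : ℝ, ∫ ω,
        ((1 / N : ℝ) * ∑ j, K (x - Y j ω) * v (Y j ω)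
          - ∫ y, K (x - y) * v y ∂ν) ^ 2 ∂P)
      ≤ MK / N := by
  have hMK : 0 ≤ MK := (hKnn 0).trans (hKb 0)
  have : Nonempty (Fin N) := ⟨⟨0, hN⟩⟩
  have hKint : Integrable K := .of_integral_ne_zero (by rw [hKdens]; exact one_ne_zero)
  have hvint : Integrable v ν := .of_bound hvm.aestronglyMeasurable 1 <| ae_of_all _ fun y => by
    rw [Real.norm_eq_abs, abs_of_nonneg (hv y).1]; exact (hv y).2
  have hKv : ∀ x y, K (x - y) * v y ∈ Set.Icc 0 MK := fun x y =>
    ⟨mul_nonneg (hKnn _) (hv y).1,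
      (mul_le_mul_of_nonneg_right (hKb _) (hv y).1).trans (mul_le_of_le_one_right hMK (hv y).2)⟩
  have hpointwise : ∀ x, ∫ ω, ((1 / N : ℝ) * ∑ j, K (x - Y j ω) * v (Y j ω)
      - ∫ y, K (x - y) * v y ∂ν) ^ 2 ∂P ≤ MK / N * ∫ y, K (x - y) * v y ∂ν := fun x => by
    simpa [one_div] using integral_sq_empirical_mean_sub_le hYm
      (fun i j hij => hindep.indepFun hij) hlaw
      ((hKm.comp (measurable_const.sub measurable_id)).mul hvm) (hKv x)
  calc _ ≤ ∫ x, MK / N * ∫ y, K (x - y) * v y ∂ν :=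
        integral_mono_of_nonneg (ae_of_all _ fun x => integral_nonneg fun ω => sq_nonneg _)
          ((integrable_prod_sub_mul hKm hvm hKint hvint).integral_prod_left.const_mul _)
          (ae_of_all _ hpointwise)
    _ = MK / N * ∫ y, v y ∂ν := by
        rw [integral_const_mul, integral_integral_sub_mul hKm hvm hKint hvint, hKdens, one_mul]
    _ ≤ MK / N := mul_le_of_le_one_right (by positivity) <|
        (integral_mono hvint (integrable_const 1) fun y => (hv y).2).trans (by simp)
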